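/- Let v ∈ ℝ^q with v ∉ P, let (x^v, z^v) be an optimal solution of (P(v)) and w^v an optimal solution of (D(v)), and let H := {y ∈ ℝ^q : (w^v)ᵀy ≥ (w^v)ᵀΓ(x^v)}. If ‖z^v‖ ≥ ε for some ε > 0, then every y ∈ H satisfies ‖y − v‖ ≥ ε; in particular B ∩ H = ∅, where B := {y ∈ {v} + C : ‖y − v‖ ≤ ε/2}. -/

import Mathlib

open Set Pointwise

noncomputable section

/-- Dot product on `Fin q → ℝ`. -/
def dotp {q : ℕ} (w y : Fin q → ℝ) : ℝ := ∑ i, w i * y i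

/-- `N` is a norm on `Fin q → ℝ`. -/
def IsNormFn {q : ℕ} (N : (Fin q → ℝ) → ℝ) : Prop :=
  (∀ z, N z = 0 ↔ z = 0) ∧ (∀ (a : ℝ) (z : Fin q → ℝ), N (a • z) = |a| * N z) ∧
    (∀ z w, N (z + w) ≤ N z + N w)

/-- Dual norm of `N`. -/
def dualNormFn {q : ℕ} (N : (Fin q → ℝ) → ℝ) (w : Fin q → ℝ) : ℝ :=
  sSup ((fun z => dotp w z) '' {z | N z ≤ 1})

/-- Distance (w.r.t. the norm `N`) from a point to a set. -/
def distFn {q : ℕ} (N : (Fin q → ℝ) → ℝ) (v : Fin q → ℝ) (A : Set (Fin q → ℝ)) : ℝ :=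
  sInf ((fun y => N (v - y)) '' A)

/-- Dual cone of a set. -/
def dualCone' {q : ℕ} (C : Set (Fin q → ℝ)) : Set (Fin q → ℝ) :=
  {w | ∀ y ∈ C, 0 ≤ dotp w y}

/-!
For `y ∈ H`, weak duality gives the chain
`ε ≤ ‖z^v‖ = d(v, P) = inf_X wᵀΓ - wᵀv ≤ wᵀΓ(x^v) - wᵀv ≤ wᵀ(y - v) ≤ ‖y - v‖`,
and `B` only contains points with `‖y - v‖ ≤ ε/2 < ε`. Two finiteness facts hide behind the
suprema and infima: the infimum over `X` is bounded below because `X` is compact and `Γ`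
continuous, and `wᵀz ≤ ‖w‖_* ‖z‖` needs the supremum defining `‖w‖_*` to be finite, which holds
because every norm on `ℝ^q` dominates a multiple of the sup norm (compactness of the unit sphere).
-/

section Dotp

variable {q : ℕ}

lemma dotp_eq_dotProduct (w y : Fin q → ℝ) : dotp w y = w ⬝ᵥ y := rfl

lemma dotp_smul (w : Fin q → ℝ) (t : ℝ) (z : Fin q → ℝ) : dotp w (t • z) = t * dotp w z :=
  dotProduct_smul t w z

lemma dotp_sub (w a b : Fin q → ℝ) : dotp w (a - b) = dotp w a - dotp w b :=
  dotProduct_sub w a b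

lemma continuous_dotp (w : Fin q → ℝ) : Continuous (dotp w) := by
  unfold dotp; fun_prop

end Dotp

namespace IsNormFn

variable {q : ℕ} {N : (Fin q → ℝ) → ℝ}

def toSeminorm (hN : IsNormFn N) : Seminorm ℝ (Fin q → ℝ) :=
  Seminorm.of N hN.2.2 fun a z => by rw [hN.2.1, Real.norm_eq_abs]

lemma nonneg (hN : IsNormFn N) (z : Fin q → ℝ) : 0 ≤ N z := apply_nonneg hN.toSeminorm z

lemma pos (hN : IsNormFn N) {z : Fin q → ℝ} (hz : z ≠ 0) : 0 < N z :=
  (hN.nonneg z).lt_of_ne' (mt (hN.1 z).1 hz)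

lemma le_mul_norm (hN : IsNormFn N) (z : Fin q → ℝ) : N z ≤ (∑ i, N (Pi.single i 1)) * ‖z‖ := by
  calc N z = N (∑ i, z i • Pi.single i 1) := by rw [← pi_eq_sum_univ' z]
    _ ≤ ∑ i, N (z i • Pi.single i 1) :=
        Finset.le_sum_of_subadditive N (map_zero hN.toSeminorm).le hN.2.2 _ _
    _ = ∑ i, |z i| * N (Pi.single i 1) := by simp only [hN.2.1]
    _ ≤ ∑ i, ‖z‖ * N (Pi.single i 1) := by
        gcongr with i
        · exact hN.nonneg _
        · exact norm_le_pi_norm z i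
    _ = (∑ i, N (Pi.single i 1)) * ‖z‖ := by rw [Finset.sum_mul]; simp only [mul_comm]

lemma continuous (hN : IsNormFn N) : Continuous N := by
  set K := ∑ i, N (Pi.single i 1)
  refine LipschitzWith.continuous (K := K.toNNReal) (LipschitzWith.of_dist_le_mul fun a b => ?_)
  rw [Real.dist_eq, dist_eq_norm, Real.coe_toNNReal _ (Finset.sum_nonneg fun i _ => hN.nonneg _)]
  exact (abs_sub_map_le_sub hN.toSeminorm a b).trans (hN.le_mul_norm _)

lemma exists_pos_mul_norm_le (hN : IsNormFn N) : ∃ c > 0, ∀ z, c * ‖z‖ ≤ N z := by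
  obtain ⟨c, hc, hcN⟩ := (isCompact_sphere (0 : Fin q → ℝ) 1).exists_forall_le'
    hN.continuous.continuousOn (a := 0) fun z hz =>
      hN.pos (ne_zero_of_mem_sphere one_ne_zero ⟨z, hz⟩)
  refine ⟨c, hc, fun z => ?_⟩
  rcases eq_or_ne z 0 with rfl | hz
  · simpa using hN.nonneg 0
  have hz' : 0 < ‖z‖ := norm_pos_iff.2 hz
  have := hcN (‖z‖⁻¹ • z) (by simp [norm_smul, hz'.ne'])
  rw [hN.2.1, abs_of_pos (inv_pos.2 hz'), inv_mul_eq_div, le_div_iff₀ hz'] at this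
  linarith

lemma dotp_le_of_dualNormFn_le_one (hN : IsNormFn N) {w : Fin q → ℝ}
    (hw : dualNormFn N w ≤ 1) (z : Fin q → ℝ) : dotp w z ≤ N z := by
  obtain ⟨c, hc, hcN⟩ := hN.exists_pos_mul_norm_le
  have hball : {z | N z ≤ 1} ⊆ Metric.closedBall 0 c⁻¹ := fun z hz => by
    rw [mem_closedBall_zero_iff, ← one_div, le_div_iff₀' hc]
    exact (hcN z).trans hz
  have hbdd : BddAbove (dotp w '' {z | N z ≤ 1}) :=
    ((isCompact_closedBall _ _).image (continuous_dotp w)).bddAbove.mono (image_mono hball)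
  rcases eq_or_ne z 0 with rfl | hz
  · simpa [dotp_eq_dotProduct] using hN.nonneg 0
  have hNz := hN.pos hz
  have hunit : dotp w ((N z)⁻¹ • z) ≤ 1 := by
    refine (le_csSup hbdd ⟨_, ?_, rfl⟩).trans hw
    simp [hN.2.1, abs_of_pos hNz, hNz.ne']
  rwa [dotp_smul, inv_mul_le_iff₀ hNz, mul_one] at hunit

end IsNormFn

theorem stmt16_general {q n : ℕ}
    (N : (Fin q → ℝ) → ℝ) (hN : IsNormFn N)
    (C : Set (Fin q → ℝ))
    (X : Set (Fin n → ℝ)) (hX : IsCompact X)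
    (Γ : (Fin n → ℝ) → (Fin q → ℝ)) (hΓ : ContinuousOn Γ X)
    (v : Fin q → ℝ)
    (xv : Fin n → ℝ) (zv : Fin q → ℝ) (wv : Fin q → ℝ)
    (hxv : xv ∈ X)
    (hzopt : N zv = distFn N v (Γ '' X + C))
    (hwnorm : dualNormFn N wv ≤ 1)
    (hwopt : sInf ((fun x => dotp wv (Γ x)) '' X) - dotp wv v
      = distFn N v (Γ '' X + C))
    (ε : ℝ) (hε : 0 < ε) (hz : ε ≤ N zv) :
    (∀ y ∈ {y : Fin q → ℝ | dotp wv (Γ xv) ≤ dotp wv y}, ε ≤ N (y - v)) ∧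
    {y : Fin q → ℝ | y - v ∈ C ∧ N (y - v) ≤ ε / 2}
      ∩ {y : Fin q → ℝ | dotp wv (Γ xv) ≤ dotp wv y} = ∅ := by
  have hdual := hN.dotp_le_of_dualNormFn_le_one hwnorm
  have hinf : sInf ((fun x => dotp wv (Γ x)) '' X) ≤ dotp wv (Γ xv) :=
    csInf_le (hX.image_of_continuousOn ((continuous_dotp wv).comp_continuousOn hΓ)).bddBelow
      ⟨xv, hxv, rfl⟩
  have hfar : ∀ y ∈ {y : Fin q → ℝ | dotp wv (Γ xv) ≤ dotp wv y}, ε ≤ N (y - v) := by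
    intro y (hy : dotp wv (Γ xv) ≤ dotp wv y)
    calc ε ≤ N zv := hz
      _ = sInf ((fun x => dotp wv (Γ x)) '' X) - dotp wv v := hzopt.trans hwopt.symm
      _ ≤ dotp wv y - dotp wv v := by linarith
      _ = dotp wv (y - v) := (dotp_sub wv y v).symm
      _ ≤ N (y - v) := hdual _
  refine ⟨hfar, eq_empty_of_forall_notMem fun y ⟨⟨_, hyB⟩, hyH⟩ => ?_⟩
  linarith [hfar y hyH]

/-- if `‖z^v‖ ≥ ε`, then every point of the supporting halfspace `H`
is at distance at least `ε` from `v`; in particular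
`B = {y ∈ {v} + C : ‖y − v‖ ≤ ε/2}` is disjoint from `H`. -/
theorem stmt16 {q n : ℕ}
    (N : (Fin q → ℝ) → ℝ) (hN : IsNormFn N)
    (C : Set (Fin q → ℝ))
    (hCclosed : IsClosed C) (hCconv : Convex ℝ C)
    (hCcone : ∀ t : ℝ, 0 ≤ t → ∀ y ∈ C, t • y ∈ C)
    (hCsolid : (interior C).Nonempty)
    (hCpointed : ∀ y ∈ C, -y ∈ C → y = 0)
    (hCnontriv : {(0 : Fin q → ℝ)} ⊂ C ∧ C ⊂ Set.univ)
    (X : Set (Fin n → ℝ)) (hX : IsCompact X) (hXconv : Convex ℝ X)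
    (hXint : (interior X).Nonempty)
    (Γ : (Fin n → ℝ) → (Fin q → ℝ)) (hΓ : ContinuousOn Γ X)
    (hΓconv : ∀ x₁ ∈ X, ∀ x₂ ∈ X, ∀ t : ℝ, t ∈ Icc (0:ℝ) 1 →
      t • Γ x₁ + (1 - t) • Γ x₂ - Γ (t • x₁ + (1 - t) • x₂) ∈ C)
    (v : Fin q → ℝ) (hv : v ∉ Γ '' X + C)
    (xv : Fin n → ℝ) (zv : Fin q → ℝ) (wv : Fin q → ℝ)
    (hxv : xv ∈ X) (hfeas : v + zv - Γ xv ∈ C)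
    (hzopt : N zv = distFn N v (Γ '' X + C))
    (hwv : wv ∈ dualCone' C) (hwnorm : dualNormFn N wv ≤ 1)
    (hwopt : sInf ((fun x => dotp wv (Γ x)) '' X) - dotp wv v
      = distFn N v (Γ '' X + C))
    (ε : ℝ) (hε : 0 < ε) (hz : ε ≤ N zv) :
    (∀ y ∈ {y : Fin q → ℝ | dotp wv (Γ xv) ≤ dotp wv y}, ε ≤ N (y - v)) ∧
    {y : Fin q → ℝ | y - v ∈ C ∧ N (y - v) ≤ ε / 2}
      ∩ {y : Fin q → ℝ | dotp wv (Γ xv) ≤ dotp wv y} = ∅ :=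
  stmt16_general N hN C X hX Γ hΓ v xv zv wv hxv hzopt hwnorm hwopt ε hε hz
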